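/- Let (A, K) be a pair and M a weak (A, K)-module with A-action π and K-action ν. Then ω(ξ) := dν(ξ) − π(ψ(ξ)) for ξ ∈ 𝔨 defines a dg representation of the Lie algebra 𝔨 on M which commutes with the actions of both A and K. -/
import Mathlib


/-!
STATEMENT 8: Let `(A, K)` be a pair and `M` a weak `(A, K)`-module with
`A`-action `π` and `K`-action `ν`.  Then `ω(ξ) := dν(ξ) − π(ψ(ξ))` defines a
dg representation of the Lie algebra `𝔨` on `M` commuting with the actions of
both `A` and `K`.

Formalization: see the file for statement 7 for the modeling of pairs and weak
modules (complexes of `k`-modules with equivariant actions `π`, `ν` and the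
derived `𝔨`-action `dν`).  Multiplication in `End M` is opposite composition,
so `f * g` is the operator `f ∘ g`.  "Commuting with the action of `K`" is
expressed, as usual for group actions on Lie-algebra actions, by
`ν(g) ∘ ω(ξ) = ω(Ad(g)ξ) ∘ ν(g)`; commuting with `A` is literal.
-/

open CategoryTheory
set_option synthInstance.maxHeartbeats 1000000
set_option maxHeartbeats 1600000

variable (k : Type) [CommRing k]

structure GroupData where
  G : Type
  [grp : Group G]
  L : Type
  [addL : AddCommGroup L]
  [modL : Module k L]
  [lieL : LieRing L]
  [lieAlgL : LieAlgebra k L]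
  Ad : G →* (L ≃ₗ[k] L)
  ad_bracket : ∀ (g : G) (x y : L), Ad g ⁅x, y⁆ = ⁅Ad g x, Ad g y⁆

attribute [instance] GroupData.grp GroupData.addL GroupData.modL GroupData.lieL GroupData.lieAlgL

variable {k}

structure WeakPair (D : GroupData k) where
  A : Type
  [ringA : Ring A]
  [algA : Algebra k A]
  φ : D.G →* (A ≃ₐ[k] A)
  dφ : D.L →ₗ[k] (A →ₗ[k] A)
  dφ_lie : ∀ x y : D.L, dφ ⁅x, y⁆ = dφ x ∘ₗ dφ y - dφ y ∘ₗ dφ x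
  dφ_der : ∀ (ξ : D.L) (a b : A), dφ ξ (a * b) = dφ ξ a * b + a * dφ ξ b
  dφ_equiv : ∀ (g : D.G) (ξ : D.L) (a : A), φ g (dφ ξ a) = dφ (D.Ad g ξ) (φ g a)

attribute [instance] WeakPair.ringA WeakPair.algA

structure HCPair (D : GroupData k) extends WeakPair D where
  ψ : D.L →ₗ[k] A
  ψ_bracket : ∀ x y : D.L, ψ ⁅x, y⁆ = ψ x * ψ y - ψ y * ψ x
  ψ_equiv : ∀ (g : D.G) (ξ : D.L), φ g (ψ ξ) = ψ (D.Ad g ξ)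
  dφ_eq : ∀ (ξ : D.L) (a : A), dφ ξ a = ψ ξ * a - a * ψ ξ

variable {D : GroupData k}

structure WeakMod (P : WeakPair D) where
  M : CochainComplex (ModuleCat.{0} k) ℤ
  π : P.A →ₐ[k] End M
  ν : D.G →* (End M)ˣ
  dν : D.L →ₗ[k] End M
  dν_lie : ∀ x y : D.L, dν ⁅x, y⁆ = dν x * dν y - dν y * dν x
  π_equiv : ∀ (g : D.G) (a : P.A), (ν g : End M) * π a = π (P.φ g a) * (ν g : End M)
  dν_equiv : ∀ (g : D.G) (ξ : D.L), (ν g : End M) * dν ξ = dν (D.Ad g ξ) * (ν g : End M)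
  dν_π : ∀ (ξ : D.L) (a : P.A), dν ξ * π a = π (P.dφ ξ a) + π a * dν ξ

namespace WeakMod

variable {P : WeakPair D}

@[ext]
structure Hom (V W : WeakMod P) where
  hom : V.M ⟶ W.M
  comm_π : ∀ a : P.A, (V.π a : V.M ⟶ V.M) ≫ hom = hom ≫ (W.π a : W.M ⟶ W.M)
  comm_ν : ∀ g : D.G, ((V.ν g : End V.M) : V.M ⟶ V.M) ≫ hom
    = hom ≫ ((W.ν g : End W.M) : W.M ⟶ W.M)
  comm_dν : ∀ ξ : D.L, (V.dν ξ : V.M ⟶ V.M) ≫ hom = hom ≫ (W.dν ξ : W.M ⟶ W.M)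

instance : Category (WeakMod P) where
  Hom := Hom
  id V := ⟨𝟙 V.M, by simp, by simp, by simp⟩
  comp f g := ⟨f.hom ≫ g.hom,
    fun a => by rw [← Category.assoc, f.comm_π, Category.assoc, g.comm_π, Category.assoc],
    fun a => by rw [← Category.assoc, f.comm_ν, Category.assoc, g.comm_ν, Category.assoc],
    fun a => by rw [← Category.assoc, f.comm_dν, Category.assoc, g.comm_dν, Category.assoc]⟩
  id_comp f := Hom.ext (by simp)
  comp_id f := Hom.ext (by simp)
  assoc f g h := Hom.ext (by simp)

/-- The forgetful functor to cochain complexes of `k`-modules. -/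
def forgetToComplex (P : WeakPair D) : WeakMod P ⥤ CochainComplex (ModuleCat.{0} k) ℤ where
  obj V := V.M
  map f := f.hom

end WeakMod

/-- An `(A,K)`-module is a weak `(A,K)`-module on which the two actions of `𝔨`
agree: `dν(ξ) = π(ψ(ξ))`. -/
def IsStrict (P : HCPair D) (V : WeakMod P.toWeakPair) : Prop :=
  ∀ ξ : D.L, V.dν ξ = V.π (P.ψ ξ)

/-- `ω(ξ) = dν(ξ) − π(ψ(ξ))` is a (dg) representation of `𝔨`
on `M`, `k`-linear in `ξ`, commuting with the `A`-action and compatible with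
(`Ad`-equivariant for) the `K`-action. -/
theorem omega_is_dg_representation (P : HCPair D) (V : WeakMod P.toWeakPair) :
    ∃ ω : D.L →ₗ[k] End V.M,
      (∀ ξ : D.L, ω ξ = V.dν ξ - V.π (P.ψ ξ)) ∧
      (∀ ξ η : D.L, ω ⁅ξ, η⁆ = ω ξ * ω η - ω η * ω ξ) ∧
      (∀ (a : P.A) (ξ : D.L), ω ξ * V.π a = V.π a * ω ξ) ∧
      (∀ (g : D.G) (ξ : D.L),
        (V.ν g : End V.M) * ω ξ = ω (D.Ad g ξ) * (V.ν g : End V.M)) := by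
  refine ⟨V.dν - (V.π.toLinearMap.comp P.ψ), fun ξ => rfl, ?_, ?_, ?_⟩
  · -- first prove commutation with π, which we need for the bracket too
    have comm : ∀ (ξ : D.L) (a : P.A),
        (V.dν ξ - V.π (P.ψ ξ)) * V.π a = V.π a * (V.dν ξ - V.π (P.ψ ξ)) := by
      intro ξ a
      have h := V.dν_π ξ a
      rw [P.dφ_eq] at h
      simp only [map_sub, map_mul] at h
      rw [sub_mul, mul_sub, h]
      abel
    intro ξ η
    simp only [LinearMap.sub_apply, LinearMap.comp_apply, AlgHom.toLinearMap_apply]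
    have hξ := comm ξ (P.ψ η)
    have hη := comm η (P.ψ ξ)
    rw [V.dν_lie, P.ψ_bracket, map_sub, map_mul, map_mul]
    have expand : (V.dν ξ - V.π (P.ψ ξ)) * (V.dν η - V.π (P.ψ η)) -
        (V.dν η - V.π (P.ψ η)) * (V.dν ξ - V.π (P.ψ ξ)) =
        (V.dν ξ * V.dν η - V.dν η * V.dν ξ)
        - ((V.dν ξ - V.π (P.ψ ξ)) * V.π (P.ψ η) - V.π (P.ψ η) * (V.dν ξ - V.π (P.ψ ξ)))
        + ((V.dν η - V.π (P.ψ η)) * V.π (P.ψ ξ) - V.π (P.ψ ξ) * (V.dν η - V.π (P.ψ η)))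
        - (V.π (P.ψ ξ) * V.π (P.ψ η) - V.π (P.ψ η) * V.π (P.ψ ξ)) := by noncomm_ring
    rw [expand, hξ, hη]
    abel
  · intro a ξ
    show (V.dν ξ - V.π (P.ψ ξ)) * V.π a = V.π a * (V.dν ξ - V.π (P.ψ ξ))
    have h := V.dν_π ξ a
    rw [P.dφ_eq] at h
    simp only [map_sub, map_mul] at h
    rw [sub_mul, mul_sub, h]
    abel
  · intro g ξ
    show (V.ν g : End V.M) * (V.dν ξ - V.π (P.ψ ξ)) =
      (V.dν (D.Ad g ξ) - V.π (P.ψ (D.Ad g ξ))) * (V.ν g : End V.M)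
    rw [mul_sub, sub_mul, V.dν_equiv, ← P.ψ_equiv, ← V.π_equiv]
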